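/- arXiv:1606.05384 — 5 statements merged into one kernel-verified Lean document; each statement's English description precedes it below -/
import Mathlib

section
/- If L is a subset of the ground set E of a matroid M such that E \ L is disconnected in the dual matroid M* (i.e., there exist disjoint nonempty A, B with E \ L = A ∪ B and r*(E \ L) = r*(A) + r*(B)), then r(E) + r(L) = r(E \ A) + r(E \ B). -/
open Matroid Set

/-- The rank of a set `X` in a matroid `M`: the largest cardinality of an
independent subset of `X`. -/
noncomputable def mrank {α : Type*} (M : Matroid α) (X : Set α) : ℕ :=
  sSup {n | ∃ I, M.Indep I ∧ I ⊆ X ∧ I.ncard = n}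

/-- A matroid is 2-connected (nonseparable) if its ground set cannot be
partitioned into two nonempty sets whose ranks sum to the rank of the whole. -/
def TwoConnected {α : Type*} (M : Matroid α) : Prop :=
  ¬ ∃ A B : Set α, A.Nonempty ∧ B.Nonempty ∧ Disjoint A B ∧ A ∪ B = M.E ∧
      mrank M A + mrank M B = mrank M M.E

/-- A subset `L` of the ground set is locked in `M` if `M|L` is 2-connected,
`M✶|(E \ L)` is 2-connected, and `min (r L) (r✶ (E \ L)) ≥ 2`. -/
def Locked {α : Type*} (M : Matroid α) (L : Set α) : Prop :=
  L ⊆ M.E ∧ TwoConnected (M ↾ L) ∧ TwoConnected (M✶ ↾ (M.E \ L)) ∧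
    2 ≤ mrank M L ∧ 2 ≤ mrank M✶ (M.E \ L)

/-! `mrank` is the `ℕ`-valued shadow of `Matroid.eRk`, so the theorem is a rearrangement of the
dual rank formula `r✶(X) = |X| + r(E \ X) - r(E)` applied to `E \ L`, `A` and `B`: since
`|E \ L| = |A| + |B|`, the cardinalities cancel and the separation `r✶(E \ L) = r✶(A) + r✶(B)`
becomes `r(L) - r(E) = r(E \ A) + r(E \ B) - 2 r(E)`. -/

lemma mrank_eq_ncard_of_isBasis' {α : Type*} {M : Matroid α} {I X : Set α}
    (hI : M.IsBasis' I X) (hIfin : I.Finite) : mrank M X = I.ncard := by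
  have hbound : ∀ m ∈ {n | ∃ J, M.Indep J ∧ J ⊆ X ∧ J.ncard = n}, m ≤ I.ncard := by
    rintro m ⟨J, hJ, hJX, rfl⟩
    have hJI : J.encard ≤ I.encard := hI.eRk_eq_encard ▸ hJ.encard_le_eRk_of_subset hJX
    rw [ncard_def, ncard_def]
    exact ENat.toNat_le_toNat hJI hIfin.encard_lt_top.ne
  exact le_antisymm (csSup_le ⟨_, I, hI.indep, hI.subset, rfl⟩ hbound)
    (le_csSup ⟨_, hbound⟩ ⟨I, hI.indep, hI.subset, rfl⟩)

lemma cast_mrank_eq_eRk {α : Type*} {M : Matroid α} {X : Set α} (hX : M.IsRkFinite X) :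
    (mrank M X : ℕ∞) = M.eRk X := by
  obtain ⟨I, hI, hIfin⟩ := hX.exists_finite_isBasis'
  rw [mrank_eq_ncard_of_isBasis' hI hIfin, hI.eRk_eq_encard, hIfin.cast_ncard_eq]

lemma mrank_dual_add_mrank_ground {α : Type*} {M : Matroid α} (hfin : M.E.Finite) {X : Set α}
    (hX : X ⊆ M.E) : mrank M✶ X + mrank M M.E = mrank M (M.E \ X) + X.ncard := by
  apply Nat.cast_injective (R := ℕ∞)
  push_cast
  rw [cast_mrank_eq_eRk (M✶.isRkFinite_of_finite (hfin.subset hX)),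
    cast_mrank_eq_eRk (M.isRkFinite_of_finite hfin),
    cast_mrank_eq_eRk (M.isRkFinite_of_finite hfin.sdiff), (hfin.subset hX).cast_ncard_eq,
    eRk_ground]
  exact M.eRk_dual_add_eRank X hX

theorem stmt3_general {α : Type*} (M : Matroid α) (hfin : M.E.Finite) (L : Set α) (hL : L ⊆ M.E)
    (A B : Set α) (hdisj : Disjoint A B)
    (hunion : A ∪ B = M.E \ L)
    (hsep : mrank M✶ (M.E \ L) = mrank M✶ A + mrank M✶ B) :
    mrank M M.E + mrank M L = mrank M (M.E \ A) + mrank M (M.E \ B) := by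
  have hAE : A ⊆ M.E := subset_union_left.trans (hunion.trans_subset sdiff_subset)
  have hBE : B ⊆ M.E := subset_union_right.trans (hunion.trans_subset sdiff_subset)
  have hcard : (M.E \ L).ncard = A.ncard + B.ncard := by
    rw [← hunion, ncard_union_eq hdisj (hfin.subset hAE) (hfin.subset hBE)]
  have hdualL := mrank_dual_add_mrank_ground hfin (sdiff_subset : M.E \ L ⊆ M.E)
  rw [sdiff_sdiff_cancel_left hL] at hdualL
  have hdualA := mrank_dual_add_mrank_ground hfin hAE
  have hdualB := mrank_dual_add_mrank_ground hfin hBE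
  omega

theorem stmt3 {α : Type*} (M : Matroid α) (hfin : M.E.Finite) (L : Set α) (hL : L ⊆ M.E)
    (A B : Set α) (hA : A.Nonempty) (hB : B.Nonempty) (hdisj : Disjoint A B)
    (hunion : A ∪ B = M.E \ L)
    (hsep : mrank M✶ (M.E \ L) = mrank M✶ A + mrank M✶ B) :
    mrank M M.E + mrank M L = mrank M (M.E \ A) + mrank M (M.E \ B) :=
  stmt3_general M hfin L hL A B hdisj hunion hsep
end

section
/- Let M be a matroid on E, and L ⊆ E such that the restriction M|L is 2-connected with r(L) ≥ 1. If a : E → ℝ is a function such that the sum of a over B is constant over all bases B of M with |B ∩ L| = r(L), and suppose additionally every element of L lies in some such basis, then a is constant on L. -/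
/-!
Call `B` an `L`-base if it is a base of `M` with `B ∩ L` a basis of `L`. If `C ⊆ L` is a
circuit and `j, k ∈ C`, extend `C \ {k}` to an `L`-base `B`; then `B - j + k` is again an
`L`-base, so comparing `a`-sums gives `a j = a k`. Hence `a` is constant on every circuit in
`L`, so no circuit meets both `{e ∈ L | a e = a j}` and its complement in `L`. The ranks of these
two sets then add up to `r(L)`, and 2-connectivity of `M|L` forces one of them to be empty.
-/

open Matroid Set

lemma finsum_mem_insert_sdiff_singleton {α G : Type*} [AddCommGroup G] {B : Set α} {a : α → G}
    {j k : α} (hB : B.Finite) (hj : j ∈ B) (hk : k ∉ B) :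
    ∑ᶠ x ∈ insert k B \ {j}, a x = ∑ᶠ x ∈ B, a x - a j + a k := by
  have hBj : ∑ᶠ x ∈ B, a x = a j + ∑ᶠ x ∈ B \ {j}, a x := by
    rw [← finsum_mem_insert a (fun h : j ∈ B \ {j} => h.2 rfl) hB.sdiff, insert_sdiff_singleton,
      insert_eq_of_mem hj]
  rw [← insert_sdiff_singleton_comm (ne_of_mem_of_not_mem hj hk).symm,
    finsum_mem_insert a (fun h => hk h.1) hB.sdiff, hBj]
  abel

namespace Matroid

variable {α : Type*} {M : Matroid α} {C I L X Y : Set α} {e x : α}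

lemma restrict_mrank_eq (hXL : X ⊆ L) : mrank (M ↾ L) X = mrank M X := by
  unfold mrank
  congr 1
  ext n
  simp only [restrict_indep_iff, mem_ofPred_eq]
  exact ⟨fun ⟨I, ⟨hI, _⟩, hIX, hn⟩ => ⟨I, hI, hIX, hn⟩,
    fun ⟨I, hI, hIX, hn⟩ => ⟨I, ⟨hI, hIX.trans hXL⟩, hIX, hn⟩⟩

lemma IsBasis.mrank_eq_ncard [M.RankFinite] (hI : M.IsBasis I X) : mrank M X = I.ncard := by
  have hle : ∀ n ∈ {n | ∃ J, M.Indep J ∧ J ⊆ X ∧ J.ncard = n}, n ≤ I.ncard := by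
    rintro _ ⟨J, hJ, hJX, rfl⟩
    have h := (hJ.encard_le_eRk_of_subset hJX).trans_eq hI.encard_eq_eRk.symm
    rwa [← hJ.finite.cast_ncard_eq, ← hI.indep.finite.cast_ncard_eq, Nat.cast_le] at h
  exact le_antisymm (csSup_le ⟨_, I, hI.indep, hI.subset, rfl⟩ hle)
    (le_csSup ⟨_, hle⟩ ⟨I, hI.indep, hI.subset, rfl⟩)

lemma IsCircuit.indep_insert_sdiff_singleton (hC : M.IsCircuit C) (hI : M.Indep I)
    (hCI : C ⊆ insert e I) (hx : x ∈ C) : M.Indep (insert e I \ {x}) := by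
  have heE : e ∈ M.E := by
    by_contra heE
    refine hC.not_indep (hI.subset fun y hy => ?_)
    obtain rfl | hyI := hCI hy
    · exact absurd (hC.subset_ground hy) heE
    · exact hyI
  by_contra hdep
  obtain ⟨C', hC'sub, hC'⟩ := ((not_indep_iff (sdiff_subset.trans
    (insert_subset heE hI.subset_ground))).1 hdep).exists_isCircuit_subset
  have hCC' : C' = C := (hC'.eq_fundCircuit_of_subset hI (hC'sub.trans sdiff_subset)).trans
    (hC.eq_fundCircuit_of_subset hI hCI).symm
  exact (hC'sub (hCC' ▸ hx)).2 rfl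

lemma IsCircuit.exists_isBase_inter_isBasis (hC : M.IsCircuit C) (hCL : C ⊆ L) (hL : L ⊆ M.E)
    (he : e ∈ C) : ∃ B, M.IsBase B ∧ M.IsBasis (B ∩ L) L ∧ C ⊆ insert e B ∧ e ∉ B := by
  obtain ⟨I, hI, hCI⟩ :=
    (hC.sdiff_singleton_indep he).subset_isBasis_of_subset (sdiff_subset.trans hCL) hL
  obtain ⟨B, hB, rfl⟩ := hI.exists_isBase
  have hCB : C ⊆ insert e B := fun y hy => by
    obtain rfl | hye := eq_or_ne y e
    · exact mem_insert _ _
    · exact Or.inr (hCI ⟨hy, hye⟩).1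
  refine ⟨B, hB, hI, hCB, fun heB => hC.not_indep (hB.indep.subset ?_)⟩
  rwa [insert_eq_of_mem heB] at hCB

lemma IsCircuit.apply_eq_of_finsum_isBase_eq [M.RankFinite] {a : α → ℝ} {c : ℝ}
    (hconst : ∀ B, M.IsBase B → (B ∩ L).ncard = mrank M L → ∑ᶠ e ∈ B, a e = c)
    (hC : M.IsCircuit C) (hCL : C ⊆ L) (hL : L ⊆ M.E) {j k : α} (hj : j ∈ C) (hk : k ∈ C) :
    a j = a k := by
  obtain rfl | hjk := eq_or_ne j k
  · rfl
  obtain ⟨B, hB, hBL, hCB, hkB⟩ := hC.exists_isBase_inter_isBasis hCL hL hk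
  have hjB : j ∈ B := (hCB hj).resolve_left hjk
  have hB' : M.IsBase (insert k B \ {j}) := hB.exchange_isBase_of_indep' hjB hkB
    (hC.indep_insert_sdiff_singleton hB.indep hCB hj)
  have hB'L : (insert k B \ {j}) ∩ L = insert k ((B ∩ L) \ {j}) := by
    rw [← insert_sdiff_singleton_comm hjk.symm, inter_sdiff_right_comm,
      insert_inter_of_mem (hCL hk)]
  have hcard : ((insert k B \ {j}) ∩ L).ncard = mrank M L := by
    rw [hB'L, ncard_exchange (fun h : k ∈ B ∩ L => hkB h.1) ⟨hjB, hCL hj⟩, hBL.mrank_eq_ncard]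
  have hsum := hconst _ hB' hcard
  rw [finsum_mem_insert_sdiff_singleton hB.finite hjB hkB,
    hconst B hB hBL.mrank_eq_ncard.symm] at hsum
  linarith

lemma mrank_add_mrank_eq_of_forall_isCircuit [M.RankFinite] (hXY : Disjoint X Y)
    (hXE : X ⊆ M.E) (hYE : Y ⊆ M.E)
    (hsep : ∀ C, M.IsCircuit C → C ⊆ X ∪ Y → C ⊆ X ∨ C ⊆ Y) :
    mrank M X + mrank M Y = mrank M (X ∪ Y) := by
  obtain ⟨I, hI⟩ := M.exists_isBasis X
  obtain ⟨J, hJ⟩ := M.exists_isBasis Y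
  have hIJ : M.Indep (I ∪ J) := by
    by_contra hdep
    obtain ⟨C, hCIJ, hC⟩ := ((not_indep_iff (union_subset hI.indep.subset_ground
      hJ.indep.subset_ground)).1 hdep).exists_isCircuit_subset
    obtain hCX | hCY := hsep C hC (hCIJ.trans (union_subset_union hI.subset hJ.subset))
    · refine hC.not_indep (hI.indep.subset fun y hy => ?_)
      exact (hCIJ hy).resolve_right fun hyJ => hXY.notMem_of_mem_left (hCX hy) (hJ.subset hyJ)
    · refine hC.not_indep (hJ.indep.subset fun y hy => ?_)
      exact (hCIJ hy).resolve_left fun hyI => hXY.notMem_of_mem_left (hI.subset hyI) (hCY hy)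
  rw [hI.mrank_eq_ncard, hJ.mrank_eq_ncard, (hI.union_isBasis_union hJ hIJ).mrank_eq_ncard,
    ncard_union_eq (hXY.mono hI.subset hJ.subset) hI.indep.finite hJ.indep.finite]

end Matroid

theorem stmt6_general {α : Type*} (M : Matroid α) (hfin : M.E.Finite) (L : Set α) (hL : L ⊆ M.E)
    (h2c : TwoConnected (M ↾ L))
    (a : α → ℝ) (c : ℝ)
    (hconst : ∀ B, M.IsBase B → (B ∩ L).ncard = mrank M L → ∑ᶠ e ∈ B, a e = c) :
    ∀ j ∈ L, ∀ k ∈ L, a j = a k := by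
  have : M.Finite := ⟨hfin⟩
  intro j hj k hk
  by_contra hjk
  set X := {e ∈ L | a e = a j}
  have hXL : X ⊆ L := sep_subset L _
  have hsep : ∀ C, M.IsCircuit C → C ⊆ X ∪ (L \ X) → C ⊆ X ∨ C ⊆ L \ X := by
    intro C hC hCL
    rw [union_sdiff_cancel hXL] at hCL
    obtain ⟨e, he⟩ := hC.nonempty
    have hCe : ∀ y ∈ C, a y = a e := fun y hy =>
      hC.apply_eq_of_finsum_isBase_eq hconst hCL hL hy he
    by_cases hej : a e = a j
    · exact .inl fun y hy => ⟨hCL hy, (hCe y hy).trans hej⟩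
    · exact .inr fun y hy => ⟨hCL hy, fun hyX => hej ((hCe y hy).symm.trans hyX.2)⟩
  refine h2c ⟨X, L \ X, ⟨j, hj, rfl⟩, ⟨k, hk, fun hkX => hjk hkX.2.symm⟩, disjoint_sdiff_right,
    by simp [hXL], ?_⟩
  rw [restrict_ground_eq, restrict_mrank_eq hXL, restrict_mrank_eq sdiff_subset,
    restrict_mrank_eq le_rfl,
    mrank_add_mrank_eq_of_forall_isCircuit disjoint_sdiff_right (hXL.trans hL)
      (sdiff_subset.trans hL) hsep, union_sdiff_cancel hXL]

theorem stmt6 {α : Type*} (M : Matroid α) (hfin : M.E.Finite) (L : Set α) (hL : L ⊆ M.E)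
    (h2c : TwoConnected (M ↾ L)) (hr : 1 ≤ mrank M L)
    (a : α → ℝ) (c : ℝ)
    (hconst : ∀ B, M.IsBase B → (B ∩ L).ncard = mrank M L → ∑ᶠ e ∈ B, a e = c)
    (hcover : ∀ e ∈ L, ∃ B, M.IsBase B ∧ (B ∩ L).ncard = mrank M L ∧ e ∈ B) :
    ∀ j ∈ L, ∀ k ∈ L, a j = a k :=
  stmt6_general M hfin L hL h2c a c hconst
end

section
/- A uniform matroid U_{r,n} with 0 ≤ r ≤ n has no locked subsets; that is, there is no subset L of the ground set such that M|L is 2-connected, M*|(E\L) is 2-connected, r(L) ≥ 2 and r*(E\L) ≥ 2. -/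
open Matroid Set

/-!
A free matroid with at least two elements is separable: split off one element. In `U_{r,n}` a
set `L` is independent when `|L| ≤ r`, and otherwise contains a base, so that `E \ L` is
coindependent. Hence one of `M|L` and `M✶|(E \ L)` is free, and of rank at least `2` if `L` is
locked.
-/

section

variable {α : Type*} {M : Matroid α} {X : Set α}

lemma mrank_bddAbove (hX : X.Finite) :
    BddAbove {n | ∃ I, M.Indep I ∧ I ⊆ X ∧ I.ncard = n} := by
  refine ⟨X.ncard, ?_⟩
  rintro n ⟨I, -, hIX, rfl⟩
  exact ncard_le_ncard hIX hX

lemma mrank_eq_ncard_of_indep (hX : X.Finite) (hXi : M.Indep X) : mrank M X = X.ncard :=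
  le_antisymm (csSup_le ⟨0, ∅, M.empty_indep, empty_subset X, ncard_empty α⟩
      fun _ ⟨_, _, hIX, hn⟩ ↦ hn ▸ ncard_le_ncard hIX hX)
    (le_csSup (mrank_bddAbove hX) ⟨X, hXi, Subset.rfl, rfl⟩)

lemma not_twoConnected_restrict_of_indep (hX : X.Finite) (hXi : M.Indep X)
    (h2 : 2 ≤ mrank M X) : ¬ TwoConnected (M ↾ X) := by
  have hrank : ∀ A ⊆ X, mrank (M ↾ X) A = A.ncard := fun A hA ↦
    mrank_eq_ncard_of_indep (hX.subset hA) (restrict_indep_iff.2 ⟨hXi.subset hA, hA⟩)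
  rw [mrank_eq_ncard_of_indep hX hXi] at h2
  obtain ⟨x, hx⟩ := (ncard_pos hX).1 (by omega)
  have hsplit := ncard_sdiff_singleton_add_one hx hX
  refine not_not_intro ⟨{x}, X \ {x}, singleton_nonempty x, ?_, disjoint_sdiff_right,
    union_sdiff_cancel (singleton_subset_iff.2 hx), ?_⟩
  · exact (ncard_pos hX.sdiff).1 (by omega)
  · rw [restrict_ground_eq, hrank _ (singleton_subset_iff.2 hx), hrank _ sdiff_subset,
      hrank _ Subset.rfl, ncard_singleton]
    omega

lemma indep_of_ncard_le_of_isBase_iff (hfin : M.E.Finite) {r : ℕ}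
    (huniform : ∀ B, M.IsBase B ↔ B ⊆ M.E ∧ B.ncard = r) {I : Set α} (hIE : I ⊆ M.E)
    (hIr : I.ncard ≤ r) : M.Indep I := by
  have hrE : r ≤ M.E.ncard := by
    obtain ⟨B, hB⟩ := M.exists_isBase
    obtain ⟨hBE, rfl⟩ := (huniform B).1 hB
    exact ncard_le_ncard hBE hfin
  obtain ⟨B, hIB, hBE, hBr⟩ := exists_subsuperset_card_eq hIE hIr hrE
  exact ((huniform B).2 ⟨hBE, hBr⟩).indep.subset hIB

end

theorem stmt7_general {α : Type*} (M : Matroid α) (hfin : M.E.Finite) (r : ℕ)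
    (huniform : ∀ B, M.IsBase B ↔ B ⊆ M.E ∧ B.ncard = r) :
    ¬ ∃ L, Locked M L := by
  rintro ⟨L, hLE, hL, hL', hrL, hrL'⟩
  by_cases hLr : L.ncard ≤ r
  · exact not_twoConnected_restrict_of_indep (hfin.subset hLE)
      (indep_of_ncard_le_of_isBase_iff hfin huniform hLE hLr) hrL hL
  · obtain ⟨B, hBL, hBr⟩ := exists_subset_card_eq (not_le.1 hLr).le
    have hB : M.IsBase B := (huniform B).2 ⟨hBL.trans hLE, hBr⟩
    have hcoind : M✶.Indep (M.E \ L) :=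
      hB.compl_isBase_dual.indep.subset (sdiff_subset_sdiff_right hBL)
    exact not_twoConnected_restrict_of_indep hfin.sdiff hcoind hrL' hL'

theorem stmt7 {α : Type*} (M : Matroid α) (hfin : M.E.Finite) (r : ℕ)
    (hr : r ≤ M.E.ncard)
    (huniform : ∀ B, M.IsBase B ↔ B ⊆ M.E ∧ B.ncard = r) :
    ¬ ∃ L, Locked M L :=
  stmt7_general M hfin r huniform
end

section
/- If L is a locked subset of a matroid M, then L is closed (a flat) in M and E \ L is closed in the dual matroid M*. -/
open Matroid Set

/-! If `e ∈ cl(L) \ L`, then `e` is a loop of `M ／ L`, hence a coloop of `(M ／ L)✶ = M✶ ↾ (E \ L)`.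
A coloop splits off as a separator `{e}, (E \ L) \ {e}`, and the second part is nonempty because
`r✶(E \ L) ≥ 2`; this contradicts the 2-connectivity of `M✶ ↾ (E \ L)`. So `L` is closed in `M`,
and the dual statement is the same argument applied to `M✶` and `E \ L`. -/

section

variable {α : Type*} {M : Matroid α} {X L : Set α} {e : α}

lemma coe_mrank_eq_eRk [M.RankFinite] (X : Set α) : (mrank M X : ℕ∞) = M.eRk X := by
  obtain ⟨I, hI⟩ := M.exists_isBasis' X
  have hIfin : I.Finite := hI.indep.finite
  suffices IsGreatest {n | ∃ J, M.Indep J ∧ J ⊆ X ∧ J.ncard = n} I.ncard by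
    rw [mrank, this.csSup_eq, hI.eRk_eq_encard, hIfin.cast_ncard_eq]
  refine ⟨⟨I, hI.indep, hI.subset, rfl⟩, ?_⟩
  rintro n ⟨J, hJ, hJX, rfl⟩
  have hle : J.encard ≤ I.encard := hI.eRk_eq_encard ▸ hJ.encard_le_eRk_of_subset hJX
  rwa [← hJ.finite.cast_ncard_eq, ← hIfin.cast_ncard_eq, Nat.cast_le] at hle

lemma mrank_lt_mrank_insert_of_notMem_closure [M.RankFinite] (he : e ∈ M.E \ M.closure X) :
    mrank M X < mrank M (insert e X) := by
  have h := eRk_insert_eq_add_one he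
  rw [← coe_mrank_eq_eRk, ← coe_mrank_eq_eRk] at h
  norm_cast at h
  omega

lemma not_twoConnected_of_isColoop [M.RankFinite] (he : M.IsColoop e)
    (hE : (M.E \ {e}).Nonempty) : ¬ TwoConnected M := by
  have hground : insert e (M.E \ {e}) = M.E := by
    rw [insert_sdiff_singleton, insert_eq_of_mem he.mem_ground]
  have hrk : M.eRk {e} + M.eRk (M.E \ {e}) = M.eRk M.E := by
    have hecl : e ∉ M.closure (M.E \ {e}) := he.notMem_closure_of_notMem fun h ↦ h.2 rfl
    rw [he.isNonloop.eRk_eq, add_comm, ← eRk_insert_eq_add_one ⟨he.mem_ground, hecl⟩, hground]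
  refine fun hconn ↦ hconn ⟨{e}, M.E \ {e}, singleton_nonempty e, hE, disjoint_sdiff_right, ?_, ?_⟩
  · rw [singleton_union, hground]
  · simpa only [← coe_mrank_eq_eRk, ← Nat.cast_add, Nat.cast_inj] using hrk

lemma isColoop_dual_restrict_compl_of_mem_closure (he : e ∈ M.closure L) (heL : e ∉ L) :
    (M✶ ↾ (M.E \ L)).IsColoop e := by
  have hloop : (M ／ L).IsLoop e := contract_isLoop_iff_mem_closure.2 ⟨he, heL⟩
  simpa only [dual_contract, delete_eq_restrict, dual_ground] using hloop.dual_isColoop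

lemma mrank_lt_mrank_insert_of_twoConnected_dual [M.Finite]
    (hconn : TwoConnected (M✶ ↾ (M.E \ L))) (h2 : 2 ≤ mrank M✶ (M.E \ L)) (he : e ∈ M.E \ L) :
    mrank M L < mrank M (insert e L) := by
  refine mrank_lt_mrank_insert_of_notMem_closure ⟨he.1, fun hecl ↦ ?_⟩
  refine not_twoConnected_of_isColoop (isColoop_dual_restrict_compl_of_mem_closure hecl he.2) ?_ hconn
  rw [restrict_ground_eq, nonempty_iff_ne_empty, Ne, sdiff_eq_empty]
  intro hsub
  have hle : M✶.eRk (M.E \ L) ≤ 1 := (M✶.eRk_mono hsub).trans (M✶.eRk_singleton_le e)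
  rw [← coe_mrank_eq_eRk] at hle
  norm_cast at hle
  omega

end

theorem stmt8 {α : Type*} (M : Matroid α) (hfin : M.E.Finite) (L : Set α)
    (hlock : Locked M L) :
    (∀ e ∈ M.E \ L, mrank M L < mrank M (insert e L)) ∧
      (∀ e ∈ M.E \ (M.E \ L), mrank M✶ (M.E \ L) < mrank M✶ (insert e (M.E \ L))) := by
  obtain ⟨hL, hconnL, hconnS, h2L, h2S⟩ := hlock
  have : M.Finite := ⟨hfin⟩
  refine ⟨fun e he ↦ mrank_lt_mrank_insert_of_twoConnected_dual hconnS h2S he,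
    fun e he ↦ mrank_lt_mrank_insert_of_twoConnected_dual ?_ ?_ he⟩
  · rwa [dual_dual, dual_ground, sdiff_sdiff_cancel_left hL]
  · rwa [dual_dual, dual_ground, sdiff_sdiff_cancel_left hL]
end

section
/- Every vertex of the polytope {x ∈ ℝ^E : x(e) ≥ 0 for all e, x(A) ≤ r(A) for all A ⊆ E, x(E) = r(E)} is the characteristic vector of a basis of M; equivalently this polytope equals the bases polytope P(M). -/
open Matroid Set

/-! Base indicators satisfy the rank inequalities, which cut out a convex set, so the hull is
contained in the polytope. Conversely, a point `x` of the polytope outside the hull would be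
strictly separated from it by a linear functional `c`. But the greedy algorithm, scanning the
ground set by decreasing `c`, yields a base `B` with `|B ∩ T| = r(T) ≥ x(T)` on every prefix `T`
and `|B| = x(E)`, and summation by parts gives `c(x) ≤ c(1_B)` (Edmonds). -/

section

variable {α : Type*} {M : Matroid α} {I J X : Set α}

namespace Matroid

theorem IsBasis'.mrank_eq_ncard (hX : X.Finite) (hJ : M.IsBasis' J X) :
    mrank M X = J.ncard := by
  refine IsGreatest.csSup_eq ⟨⟨J, hJ.indep, hJ.subset, rfl⟩, ?_⟩
  rintro n ⟨I, hI, hIX, rfl⟩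
  obtain ⟨J', hJ', hIJ'⟩ := hI.subset_isBasis'_of_subset hIX
  calc I.ncard ≤ J'.ncard := ncard_le_ncard hIJ' (hX.subset hJ'.subset)
    _ = J.ncard := by rw [ncard_def, ncard_def, hJ'.encard_eq_encard hJ]

theorem Indep.ncard_le_mrank (hX : X.Finite) (hI : M.Indep I) (hIX : I ⊆ X) :
    I.ncard ≤ mrank M X :=
  le_csSup ⟨X.ncard, by rintro n ⟨J, -, hJX, rfl⟩; exact ncard_le_ncard hJX hX⟩ ⟨I, hI, hIX, rfl⟩

theorem finite_setOf_isBase (hE : M.E.Finite) : {B | M.IsBase B}.Finite :=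
  hE.finite_subsets.subset fun _ hB ↦ hB.subset_ground

end Matroid

theorem finsum_mem_indicator_one (A B : Set α) :
    ∑ᶠ e ∈ A, B.indicator (1 : α → ℝ) e = (A ∩ B).ncard := by
  rw [finsum_mem_def, indicator_indicator, ← finsum_mem_def]
  by_cases h : (A ∩ B).Finite
  · rw [← finsum_one, Nat.cast_finsum_mem h]
    simp
  · rw [Set.Infinite.ncard h, finsum_mem_eq_zero_of_infinite]
    · simp
    · simpa using h

theorem map_eq_finsum_mem_smul_map_single [DecidableEq α] {R N F : Type*} [Semiring R]
    [AddCommMonoid N] [Module R N] [FunLike F (α → R) N] [LinearMapClass F R (α → R) N]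
    (f : F) {s : Set α} (hs : s.Finite) {y : α → R}
    (hy : ∀ e ∉ s, y e = 0) : f y = ∑ᶠ e ∈ s, y e • f (Pi.single e 1) := by
  have hsum : y = ∑ e ∈ hs.toFinset, y e • Pi.single e 1 := by
    ext a
    by_cases ha : a ∈ s <;> simp [Finset.sum_apply, Pi.single_apply, ha, hy]
  rw [finsum_mem_eq_finite_toFinset_sum _ hs]
  conv_lhs => rw [hsum]
  simp [map_sum, map_smul]

theorem Matroid.IsBasis'.finsum_mem_indicator_eq_mrank (hX : X.Finite) (hJ : M.IsBasis' J X) :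
    ∑ᶠ e ∈ X, J.indicator (1 : α → ℝ) e = mrank M X := by
  rw [finsum_mem_indicator_one, inter_eq_right.2 hJ.subset, hJ.mrank_eq_ncard hX]

def baseRankPolytope (M : Matroid α) : Set (α → ℝ) :=
  {x | (∀ e ∉ M.E, x e = 0) ∧ (∀ e, 0 ≤ x e) ∧
    (∀ A ⊆ M.E, ∑ᶠ e ∈ A, x e ≤ (mrank M A : ℝ)) ∧ ∑ᶠ e ∈ M.E, x e = (mrank M M.E : ℝ)}

theorem isLinearMap_finsum_mem {R : Type*} [Semiring R] {A : Set α} (hA : A.Finite) :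
    IsLinearMap R fun x : α → R ↦ ∑ᶠ e ∈ A, x e :=
  ⟨fun _ _ ↦ finsum_mem_add_distrib hA, fun r _ ↦ by simp only [Pi.smul_apply, smul_finsum_mem hA]⟩

theorem convex_baseRankPolytope (hE : M.E.Finite) : Convex ℝ (baseRankPolytope M) := by
  simp only [baseRankPolytope, ofPred_and, ofPred_forall]
  exact (convex_iInter fun e ↦ convex_iInter fun _ ↦
      convex_hyperplane (LinearMap.proj e).isLinear 0).inter <|
    (convex_iInter fun e ↦ convex_halfSpace_ge (LinearMap.proj e).isLinear 0).inter <|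
    (convex_iInter fun A ↦ convex_iInter fun hA ↦
      convex_halfSpace_le (isLinearMap_finsum_mem (hE.subset hA)) _).inter <|
    convex_hyperplane (isLinearMap_finsum_mem hE) _

theorem Matroid.IsBase.indicator_mem_baseRankPolytope (hE : M.E.Finite) {B : Set α}
    (hB : M.IsBase B) : B.indicator 1 ∈ baseRankPolytope M := by
  refine ⟨fun e he ↦ indicator_of_notMem (fun heB ↦ he (hB.subset_ground heB)) _,
    fun e ↦ indicator_nonneg (fun _ _ ↦ zero_le_one) e, fun A hA ↦ ?_, ?_⟩
  · rw [finsum_mem_indicator_one]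
    exact_mod_cast (hB.indep.subset inter_subset_right).ncard_le_mrank (hE.subset hA)
      inter_subset_left
  · exact hB.isBasis_ground.isBasis'.finsum_mem_indicator_eq_mrank hE

/- The induction adds elements by decreasing `c`, so this is summation by parts over prefixes:
on each prefix the basis has rank-many elements while `x` has at most that much mass. -/
theorem Matroid.exists_isBasis_forall_mul_sum_le {x : α → ℝ}
    (hx : ∀ A ⊆ M.E, ∑ᶠ e ∈ A, x e ≤ (mrank M A : ℝ)) (c : α → ℝ) (T : Finset α)
    (hT : ↑T ⊆ M.E) :
    ∃ J, M.IsBasis J T ∧ ∀ m, (∀ e ∈ T, m ≤ c e) →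
      m * ∑ e ∈ T, (J.indicator 1 e - x e) ≤ ∑ e ∈ T, (J.indicator 1 e - x e) * c e := by
  classical
  induction T using Finset.induction_on_min_value c with
  | empty => exact ⟨∅, by simp, by simp⟩
  | insert a s has hmin ih =>
    obtain ⟨J, hJ, hJc⟩ := ih ((Finset.coe_subset.2 (s.subset_insert a)).trans hT)
    obtain ⟨J', hJ', hJJ'⟩ := hJ.indep.subset_isBasis_of_subset
      (hJ.subset.trans (Finset.coe_subset.2 (s.subset_insert a))) hT
    have hJ's : J = J' ∩ s := hJ.eq_of_subset_indep (hJ'.indep.subset inter_subset_left)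
      (subset_inter hJJ' hJ.subset) inter_subset_right
    set w : α → ℝ := fun e ↦ J'.indicator 1 e - x e
    have hws : ∀ e ∈ s, J.indicator 1 e - x e = w e := fun e he ↦ by
      simp [w, hJ's, indicator_apply, he]
    have hw_nonneg : 0 ≤ ∑ e ∈ insert a s, w e := by
      have hJ'1 := hJ'.isBasis'.finsum_mem_indicator_eq_mrank (insert a s).finite_toSet
      have hxT := hx _ hT
      rw [finsum_mem_coe_finset] at hJ'1 hxT
      rw [Finset.sum_sub_distrib, hJ'1]
      linarith
    have hwcs : ∀ e ∈ s, (J.indicator 1 e - x e) * c e = w e * c e := fun e he ↦ by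
      rw [hws e he]
    have hs : c a * ∑ e ∈ s, w e ≤ ∑ e ∈ s, w e * c e := by
      simpa only [Finset.sum_congr rfl hws, Finset.sum_congr rfl hwcs] using hJc (c a) hmin
    refine ⟨J', hJ', fun m hm ↦ ?_⟩
    calc m * ∑ e ∈ insert a s, w e ≤ c a * ∑ e ∈ insert a s, w e :=
          mul_le_mul_of_nonneg_right (hm a (s.mem_insert_self a)) hw_nonneg
      _ = w a * c a + c a * ∑ e ∈ s, w e := by rw [Finset.sum_insert has]; ring
      _ ≤ ∑ e ∈ insert a s, w e * c e := by rw [Finset.sum_insert has]; linarith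

theorem Matroid.exists_isBase_finsum_mul_le (hE : M.E.Finite) {x : α → ℝ}
    (hx : ∀ A ⊆ M.E, ∑ᶠ e ∈ A, x e ≤ (mrank M A : ℝ))
    (hxE : ∑ᶠ e ∈ M.E, x e = (mrank M M.E : ℝ)) (c : α → ℝ) :
    ∃ B, M.IsBase B ∧ ∑ᶠ e ∈ M.E, x e * c e ≤ ∑ᶠ e ∈ M.E, B.indicator 1 e * c e := by
  obtain ⟨B, hB, hBc⟩ := exists_isBasis_forall_mul_sum_le hx c hE.toFinset (by simp)
  rw [hE.coe_toFinset, isBasis_ground_iff] at hB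
  obtain ⟨m, hm⟩ := (hE.image c).bddBelow
  have h := hBc m fun e he ↦ hm ⟨e, hE.mem_toFinset.1 he, rfl⟩
  have hB1 := hB.isBasis_ground.isBasis'.finsum_mem_indicator_eq_mrank hE
  rw [finsum_mem_eq_finite_toFinset_sum _ hE] at hB1 hxE
  rw [Finset.sum_sub_distrib, hB1, hxE, sub_self, mul_zero] at h
  simp only [sub_mul, Finset.sum_sub_distrib, sub_nonneg] at h
  refine ⟨B, hB, ?_⟩
  rwa [finsum_mem_eq_finite_toFinset_sum _ hE, finsum_mem_eq_finite_toFinset_sum _ hE]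

end

theorem stmt11 {α : Type*} (M : Matroid α) (hfin : M.E.Finite) :
    {x : α → ℝ | (∀ e ∉ M.E, x e = 0) ∧ (∀ e, 0 ≤ x e) ∧
        (∀ A ⊆ M.E, ∑ᶠ e ∈ A, x e ≤ (mrank M A : ℝ)) ∧
        ∑ᶠ e ∈ M.E, x e = (mrank M M.E : ℝ)} =
      convexHull ℝ {x : α → ℝ | ∃ B, M.IsBase B ∧ x = B.indicator 1} := by
  classical
  change baseRankPolytope M = _
  refine Subset.antisymm ?_ <| convexHull_min
    (fun _ ⟨_, hB, hx⟩ ↦ hx ▸ hB.indicator_mem_baseRankPolytope hfin)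
    (convex_baseRankPolytope hfin)
  rintro x ⟨hx0, -, hxA, hxE⟩
  by_contra hx
  have hfinite : {x : α → ℝ | ∃ B, M.IsBase B ∧ x = B.indicator 1}.Finite :=
    ((finite_setOf_isBase hfin).image fun B ↦ B.indicator 1).subset
      fun _ ⟨B, hB, hx⟩ ↦ ⟨B, hB, hx.symm⟩
  obtain ⟨f, u, hfB, hfx⟩ :=
    geometric_hahn_banach_closed_point (convex_convexHull ℝ _) (hfinite.isClosed_convexHull ℝ) hx
  obtain ⟨B, hB, hBx⟩ := exists_isBase_finsum_mul_le hfin hxA hxE fun e ↦ f (Pi.single e 1)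
  have hfB' := hfB _ (subset_convexHull ℝ _ ⟨B, hB, rfl⟩)
  rw [map_eq_finsum_mem_smul_map_single f hfin
    fun e he ↦ indicator_of_notMem (fun heB ↦ he (hB.subset_ground heB)) _] at hfB'
  rw [map_eq_finsum_mem_smul_map_single f hfin hx0] at hfx
  simp only [smul_eq_mul] at hfB' hfx
  linarith
end
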